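/- Let G be a simple graph on a finite vertex type V with |V| ≥ 2k and k ≥ 1, and suppose no k-element subset of V is a dominating set of G. Then the diameter of the reduction graph G' equals 3 if G has a dominating set of size at most 2k, and equals 2 otherwise. -/

import Mathlib

/-!
The elements of `V` form a clique and, since no `k`-set dominates, every `k`-set `S` has a
neighbour in `V`; hence all distances in `G'` are at most `3`, and a `k`-set is at distance
exactly `2` from each of its own elements. Two `k`-sets `S`, `T` are at distance at most `2` iff
they have a common neighbour, i.e. a vertex dominated by neither, i.e. iff `S ∪ T` does not
dominate. Since `|V| ≥ 2k`, a dominating set of size at most `2k` is contained in such a union.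
-/

/-- `S` dominates `v` in `G` if `v ∈ S` or some element of `S` is adjacent to `v`. -/
def SimpleGraph.DominatesVert {V : Type*} (G : SimpleGraph V) (S : Finset V) (v : V) : Prop :=
  v ∈ S ∨ ∃ u ∈ S, G.Adj u v

/-- `S` is a dominating set of `G` if it dominates every vertex. -/
def SimpleGraph.IsDominatingSet {V : Type*} (G : SimpleGraph V) (S : Finset V) : Prop :=
  ∀ v : V, G.DominatesVert S v

/-- The dominating-set-to-diameter reduction graph `G'`: its vertices are the `k`-element
subsets of `V` together with the elements of `V`; the elements of `V` form a clique; a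
`k`-subset `S` is adjacent to a vertex `v ∈ V` iff `S` does not dominate `v`; two `k`-subsets
are never adjacent. -/
def SimpleGraph.reductionGraph {V : Type*} (G : SimpleGraph V) (k : ℕ) :
    SimpleGraph ({A : Finset V // A.card = k} ⊕ V) where
  Adj x y :=
    match x, y with
    | Sum.inl _, Sum.inl _ => False
    | Sum.inl S, Sum.inr v => ¬ G.DominatesVert S.1 v
    | Sum.inr v, Sum.inl S => ¬ G.DominatesVert S.1 v
    | Sum.inr u, Sum.inr v => u ≠ v
  symm := by
    constructor
    rintro (S | u) (T | v) hadj
    · exact hadj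
    · exact hadj
    · exact hadj
    · exact hadj.symm
  loopless := by
    constructor
    rintro (S | u) hadj
    · exact hadj
    · exact hadj rfl

theorem Finset.exists_card_eq_card_eq_subset_union {α : Type*} [Fintype α] [DecidableEq α]
    {A : Finset α} {k : ℕ} (hA : A.card ≤ 2 * k) (hα : 2 * k ≤ Fintype.card α) :
    ∃ S T : Finset α, S.card = k ∧ T.card = k ∧ A ⊆ S ∪ T := by
  obtain ⟨B, hAB, -, hB⟩ := exists_subsuperset_card_eq (subset_univ A) hA (by simpa using hα)
  obtain ⟨S, hSB, hS⟩ := exists_subset_card_eq (show k ≤ B.card by omega)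
  refine ⟨S, B \ S, hS, by rw [card_sdiff_of_subset hSB]; omega, ?_⟩
  rwa [union_sdiff_of_subset hSB]

namespace SimpleGraph

variable {V : Type*} {G : SimpleGraph V}

theorem DominatesVert.mono {S T : Finset V} {v : V} (hST : S ⊆ T) (h : G.DominatesVert S v) :
    G.DominatesVert T v :=
  h.imp (@hST v) fun ⟨u, hu, huv⟩ => ⟨u, hST hu, huv⟩

theorem IsDominatingSet.mono {S T : Finset V} (hST : S ⊆ T) (h : G.IsDominatingSet S) :
    G.IsDominatingSet T :=
  fun v => (h v).mono hST

theorem dominatesVert_union [DecidableEq V] {S T : Finset V} {v : V} :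
    G.DominatesVert (S ∪ T) v ↔ G.DominatesVert S v ∨ G.DominatesVert T v := by
  simp only [DominatesVert, Finset.mem_union, or_and_right, exists_or]
  exact or_or_or_comm

theorem two_le_edist {u v : V} (hne : u ≠ v) (hadj : ¬ G.Adj u v) : 2 ≤ G.edist u v := by
  by_contra! h
  exact (edist_le_one_iff_adj_or_eq.1 (Order.le_of_lt_add_one h)).elim hadj hne

theorem three_le_edist {u v : V} (hne : u ≠ v) (hadj : ¬ G.Adj u v)
    (hcommon : G.commonNeighbors u v = ∅) : 3 ≤ G.edist u v :=
  Order.add_one_le_of_lt (two_lt_edist_iff.2 ⟨hne, hadj, hcommon⟩)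

theorem diam_eq_of_edist_le_of_le_edist {n : ℕ} (h : ∀ u v, G.edist u v ≤ n) {u v : V}
    (huv : n ≤ G.edist u v) : G.diam = n := by
  rw [diam, le_antisymm (ediam_le_of_edist_le h) (huv.trans edist_le_ediam), ENat.toNat_natCast]

namespace reductionGraph

variable {k : ℕ} {S T : {A : Finset V // A.card = k}} {u v : V}

theorem edist_inr_inr_le_one : (G.reductionGraph k).edist (.inr u) (.inr v) ≤ 1 :=
  edist_le_one_iff_adj_or_eq.2 <| (em (u = v)).symm.imp id (congrArg Sum.inr)

theorem edist_inl_inr_le_one (h : ¬ G.DominatesVert S.1 v) :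
    (G.reductionGraph k).edist (.inl S) (.inr v) ≤ 1 :=
  (edist_eq_one_iff_adj.2 h).le

theorem edist_inl_inr_le_two (hS : ¬ G.IsDominatingSet S.1) :
    (G.reductionGraph k).edist (.inl S) (.inr v) ≤ 2 := by
  obtain ⟨w, hw⟩ := not_forall.1 hS
  calc (G.reductionGraph k).edist (.inl S) (.inr v)
      ≤ (G.reductionGraph k).edist (.inl S) (.inr w) +
          (G.reductionGraph k).edist (.inr w) (.inr v) := SimpleGraph.edist_triangle
    _ ≤ 1 + 1 := add_le_add (edist_inl_inr_le_one hw) edist_inr_inr_le_one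

theorem edist_inl_inl_le_two (hS : ¬ G.DominatesVert S.1 v) (hT : ¬ G.DominatesVert T.1 v) :
    (G.reductionGraph k).edist (.inl S) (.inl T) ≤ 2 := by
  calc (G.reductionGraph k).edist (.inl S) (.inl T)
      ≤ (G.reductionGraph k).edist (.inl S) (.inr v) +
          (G.reductionGraph k).edist (.inr v) (.inl T) := SimpleGraph.edist_triangle
    _ ≤ 1 + 1 :=
      add_le_add (edist_inl_inr_le_one hS) (edist_comm.trans_le (edist_inl_inr_le_one hT))

theorem edist_inl_inl_le_three (hS : ¬ G.IsDominatingSet S.1) (hT : ¬ G.IsDominatingSet T.1) :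
    (G.reductionGraph k).edist (.inl S) (.inl T) ≤ 3 := by
  obtain ⟨w, hw⟩ := not_forall.1 hS
  calc (G.reductionGraph k).edist (.inl S) (.inl T)
      ≤ (G.reductionGraph k).edist (.inl S) (.inr w) +
          (G.reductionGraph k).edist (.inr w) (.inl T) := SimpleGraph.edist_triangle
    _ ≤ 1 + 2 :=
      add_le_add (edist_inl_inr_le_one hw) (edist_comm.trans_le (edist_inl_inr_le_two hT))

theorem edist_le_three (hno : ∀ A : Finset V, A.card = k → ¬ G.IsDominatingSet A)
    (x y : {A : Finset V // A.card = k} ⊕ V) : (G.reductionGraph k).edist x y ≤ 3 := by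
  rcases x with S | u <;> rcases y with T | v
  · exact edist_inl_inl_le_three (hno S.1 S.2) (hno T.1 T.2)
  · exact (edist_inl_inr_le_two (hno S.1 S.2)).trans (by norm_num)
  · exact edist_comm.trans_le ((edist_inl_inr_le_two (hno T.1 T.2)).trans (by norm_num))
  · exact edist_inr_inr_le_one.trans (by norm_num)

theorem edist_le_two [DecidableEq V]
    (hunion : ∀ A B : Finset V, A.card = k → B.card = k → ¬ G.IsDominatingSet (A ∪ B))
    (x y : {A : Finset V // A.card = k} ⊕ V) : (G.reductionGraph k).edist x y ≤ 2 := by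
  have hnotdom (S : {A : Finset V // A.card = k}) : ¬ G.IsDominatingSet S.1 := by
    simpa using hunion S.1 S.1 S.2 S.2
  rcases x with S | u <;> rcases y with T | v
  · obtain ⟨v, hv⟩ := not_forall.1 (hunion S.1 T.1 S.2 T.2)
    rw [dominatesVert_union, not_or] at hv
    exact edist_inl_inl_le_two hv.1 hv.2
  · exact edist_inl_inr_le_two (hnotdom S)
  · exact edist_comm.trans_le (edist_inl_inr_le_two (hnotdom T))
  · exact edist_inr_inr_le_one.trans (by norm_num)

theorem two_le_edist_inl_inr (hv : v ∈ S.1) :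
    2 ≤ (G.reductionGraph k).edist (.inl S) (.inr v) :=
  two_le_edist Sum.inl_ne_inr fun h => h (.inl hv)

theorem three_le_edist_inl_inl [DecidableEq V] (hS : ¬ G.IsDominatingSet S.1)
    (hST : G.IsDominatingSet (S.1 ∪ T.1)) :
    3 ≤ (G.reductionGraph k).edist (.inl S) (.inl T) := by
  refine three_le_edist (fun h => hS ?_) id (Set.eq_empty_of_forall_notMem ?_)
  · simpa [Sum.inl_injective h] using hST
  · rintro (_ | w) ⟨hSw, hwT⟩
    · exact hSw
    · exact (dominatesVert_union.1 (hST w)).elim hSw hwT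

end reductionGraph

end SimpleGraph

open SimpleGraph.reductionGraph in
/-- Main combinatorial claim of the reduction (Theorem 2.3): if `|V| ≥ 2k`, `k ≥ 1`, and no
`k`-element subset of `V` is a dominating set of `G`, then the diameter of the reduction graph
`G'` equals `3` if `G` has a dominating set of size at most `2k`, and equals `2` otherwise. -/
theorem reduction_diam_two_or_three {V : Type*} [Fintype V] [DecidableEq V]
    (G : SimpleGraph V) (k : ℕ) (hk : 1 ≤ k) (hV : 2 * k ≤ Fintype.card V)
    (hno : ∀ A : Finset V, A.card = k → ¬ G.IsDominatingSet A) :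
    ((∃ A : Finset V, A.card ≤ 2 * k ∧ G.IsDominatingSet A) →
        (G.reductionGraph k).diam = 3) ∧
      ((¬ ∃ A : Finset V, A.card ≤ 2 * k ∧ G.IsDominatingSet A) →
        (G.reductionGraph k).diam = 2) := by
  refine ⟨fun ⟨A, hA, hAdom⟩ => ?_, fun hsmall => ?_⟩
  · obtain ⟨S, T, hS, hT, hAST⟩ := Finset.exists_card_eq_card_eq_subset_union hA hV
    exact SimpleGraph.diam_eq_of_edist_le_of_le_edist (edist_le_three hno)
      (three_le_edist_inl_inl (S := ⟨S, hS⟩) (T := ⟨T, hT⟩) (hno S hS) (hAdom.mono hAST))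
  · obtain ⟨S, -, hS⟩ := (Finset.univ : Finset V).exists_subset_card_eq (n := k)
      (by rw [Finset.card_univ]; omega)
    obtain ⟨v, hv⟩ := Finset.card_pos.1 (hS ▸ hk)
    refine SimpleGraph.diam_eq_of_edist_le_of_le_edist (edist_le_two fun A B hA hB hAB => ?_)
      (two_le_edist_inl_inr (S := ⟨S, hS⟩) hv)
    exact hsmall ⟨A ∪ B, (Finset.card_union_le A B).trans (by omega), hAB⟩
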